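/- Let G1 and G2 be nonempty graphs. The Cartesian product G1 □ G2 is regular and K3-regular (all vertices have the same degree and the same triangle-degree) if and only if both G1 and G2 are regular and K3-regular. -/

import Mathlib

open SimpleGraph Finset

/-- The K3-degree of a vertex: the number of triangles (3-cliques) of `G` containing `v`. -/
noncomputable def K3deg {V : Type*} (G : SimpleGraph V) (v : V) : ℕ :=
  {t : Finset V | G.IsNClique 3 t ∧ v ∈ t}.ncard

/-- The degree of a vertex, as the cardinality of its open neighbourhood. -/
noncomputable def deg {V : Type*} (G : SimpleGraph V) (v : V) : ℕ :=
  (G.neighborSet v).ncard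

/-- `G` has parameters `(r2, r3)`: every vertex has degree `r2` and K3-degree `r3`. -/
def HasParams {V : Type*} (G : SimpleGraph V) (r2 r3 : ℕ) : Prop :=
  ∀ v : V, deg G v = r2 ∧ K3deg G v = r3

/-! A clique of `G □ H` cannot use edges of both kinds, so it lies in a single `G`-fibre or a
single `H`-fibre. Hence for `n ≥ 2` the `n`-cliques through `(a, b)` are the disjoint union of
copies of those of `G` through `a` and those of `H` through `b`: the triangle-degree, like the
degree, is additive, `d (a, b) = d a + d b`. On a product of nonempty types, `f a + g b` is
constant exactly when `f` and `g` are. -/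

theorem exists_forall_eq_iff_of_eq_add {α β M : Type*} [Nonempty α] [Nonempty β]
    [Add M] [IsCancelAdd M] {F : α × β → M} {f : α → M} {g : β → M}
    (hF : ∀ p, F p = f p.1 + g p.2) :
    (∃ r, ∀ p, F p = r) ↔ (∃ r, ∀ a, f a = r) ∧ (∃ s, ∀ b, g b = s) := by
  obtain ⟨a₀⟩ := ‹Nonempty α›
  obtain ⟨b₀⟩ := ‹Nonempty β›
  simp only [hF]
  constructor
  · rintro ⟨r, hr⟩
    refine ⟨⟨f a₀, fun a => ?_⟩, ⟨g b₀, fun b => ?_⟩⟩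
    · exact add_right_cancel ((hr (a, b₀)).trans (hr (a₀, b₀)).symm)
    · exact add_left_cancel ((hr (a₀, b)).trans (hr (a₀, b₀)).symm)
  · rintro ⟨⟨r, hr⟩, ⟨s, hs⟩⟩
    exact ⟨r + s, fun p => by rw [hr, hs]⟩

namespace SimpleGraph

variable {α β : Type*} {G : SimpleGraph α} {H : SimpleGraph β}

def cliquesThrough (G : SimpleGraph α) (n : ℕ) (a : α) : Set (Finset α) :=
  {s | G.IsNClique n s ∧ a ∈ s}

theorem Embedding.isNClique_map_iff {G' : SimpleGraph β} (f : G ↪g G') {n : ℕ}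
    {s : Finset α} :
    G'.IsNClique n (s.map f.toEmbedding) ↔ G.IsNClique n s := by
  rw [isNClique_iff, isNClique_iff, card_map, IsClique, IsClique, coe_map,
    f.toEmbedding.injective.injOn.pairwise_image]
  have hadj : Function.onFun G'.Adj f.toEmbedding = G.Adj := by
    ext v w
    exact f.map_adj_iff
  rw [hadj]

theorem Embedding.map_mem_cliquesThrough_iff {G' : SimpleGraph β} (f : G ↪g G') {n : ℕ}
    {s : Finset α} {a : α} :
    s.map f.toEmbedding ∈ G'.cliquesThrough n (f a) ↔ s ∈ G.cliquesThrough n a :=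
  and_congr f.isNClique_map_iff (mem_map' f.toEmbedding)

theorem IsClique.forall_snd_eq_or_forall_fst_eq {s : Set (α × β)} (hs : (G □ H).IsClique s)
    {p : α × β} (hp : p ∈ s) : (∀ x ∈ s, x.2 = p.2) ∨ (∀ x ∈ s, x.1 = p.1) := by
  by_contra! ⟨⟨x, hx, hx₂⟩, ⟨y, hy, hy₁⟩⟩
  -- `x` and `y` each share one coordinate with `p`, hence agree in neither, yet are adjacent.
  have hxp : x.1 = p.1 := by
    have := hs hx hp (by rintro rfl; exact hx₂ rfl)
    rw [boxProd_adj] at this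
    tauto
  have hyp : y.2 = p.2 := by
    have := hs hy hp (by rintro rfl; exact hy₁ rfl)
    rw [boxProd_adj] at this
    tauto
  have := hs hx hy (by rintro rfl; exact hx₂ hyp)
  rw [boxProd_adj] at this
  rcases this with ⟨-, h⟩ | ⟨-, h⟩
  · exact hx₂ (h.trans hyp)
  · exact hy₁ (h.symm.trans hxp)

theorem map_boxProdLeft_image_fst [DecidableEq α] {t : Finset (α × β)} {b : β}
    (ht : ∀ x ∈ t, x.2 = b) : (t.image Prod.fst).map (G.boxProdLeft H b).toEmbedding = t := by
  classical
  rw [map_eq_image, image_image]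
  conv_rhs => rw [← image_id (s := t)]
  exact image_congr fun x hx => Prod.ext rfl (ht x hx).symm

theorem map_boxProdRight_image_snd [DecidableEq β] {t : Finset (α × β)} {a : α}
    (ht : ∀ x ∈ t, x.1 = a) : (t.image Prod.snd).map (G.boxProdRight H a).toEmbedding = t := by
  classical
  rw [map_eq_image, image_image]
  conv_rhs => rw [← image_id (s := t)]
  exact image_congr fun x hx => Prod.ext (ht x hx).symm rfl

theorem cliquesThrough_boxProd (n : ℕ) (a : α) (b : β) :
    (G □ H).cliquesThrough n (a, b) =
      Finset.map (G.boxProdLeft H b).toEmbedding '' G.cliquesThrough n a ∪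
        Finset.map (G.boxProdRight H a).toEmbedding '' H.cliquesThrough n b := by
  classical
  ext t
  constructor
  · rintro ⟨ht, hab⟩
    rcases ht.isClique.forall_snd_eq_or_forall_fst_eq hab with hb | ha
    · refine Or.inl ⟨t.image Prod.fst, ?_, map_boxProdLeft_image_fst hb⟩
      rw [← (G.boxProdLeft H b).map_mem_cliquesThrough_iff, map_boxProdLeft_image_fst hb]
      exact ⟨ht, hab⟩
    · refine Or.inr ⟨t.image Prod.snd, ?_, map_boxProdRight_image_snd ha⟩
      rw [← (G.boxProdRight H a).map_mem_cliquesThrough_iff, map_boxProdRight_image_snd ha]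
      exact ⟨ht, hab⟩
  · rintro (⟨s, hs, rfl⟩ | ⟨s, hs, rfl⟩)
    · exact (G.boxProdLeft H b).map_mem_cliquesThrough_iff.2 hs
    · exact (G.boxProdRight H a).map_mem_cliquesThrough_iff.2 hs

theorem disjoint_map_boxProdLeft_map_boxProdRight {n : ℕ} (hn : 1 < n) (a : α) (b : β) :
    Disjoint (Finset.map (G.boxProdLeft H b).toEmbedding '' G.cliquesThrough n a)
      (Finset.map (G.boxProdRight H a).toEmbedding '' H.cliquesThrough n b) := by
  rw [Set.disjoint_left]
  rintro _ ⟨s, hs, rfl⟩ ⟨s', -, hs'⟩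
  have hab : ∀ x ∈ s.map (G.boxProdLeft H b).toEmbedding, x = (a, b) := by
    intro x hx
    have hb : x.2 = b := by
      obtain ⟨x', -, rfl⟩ := mem_map.1 hx
      rfl
    rw [← hs'] at hx
    obtain ⟨x', -, rfl⟩ := mem_map.1 hx
    exact Prod.ext rfl hb
  have hcard : #(s.map (G.boxProdLeft H b).toEmbedding) ≤ 1 :=
    card_le_one.2 fun x hx y hy => (hab x hx).trans (hab y hy).symm
  rw [card_map, hs.1.card_eq] at hcard
  omega

theorem ncard_cliquesThrough_boxProd [Finite α] [Finite β] {n : ℕ} (hn : 1 < n) (a : α)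
    (b : β) :
    ((G □ H).cliquesThrough n (a, b)).ncard =
      (G.cliquesThrough n a).ncard + (H.cliquesThrough n b).ncard := by
  rw [cliquesThrough_boxProd,
    Set.ncard_union_eq (disjoint_map_boxProdLeft_map_boxProdRight hn a b),
    Set.ncard_image_of_injective _ (Finset.map_injective _),
    Set.ncard_image_of_injective _ (Finset.map_injective _)]

end SimpleGraph

theorem deg_eq_degree {V : Type*} (G : SimpleGraph V) (v : V) [Fintype (G.neighborSet v)] :
    deg G v = G.degree v := by
  rw [deg, Set.ncard_eq_toFinset_card', ← card_neighborSet_eq_degree, Set.toFinset_card]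

theorem deg_boxProd {α β : Type*} [Fintype α] [Fintype β] (G : SimpleGraph α)
    (H : SimpleGraph β) (x : α × β) : deg (G □ H) x = deg G x.1 + deg H x.2 := by
  classical
  rw [deg_eq_degree, deg_eq_degree, deg_eq_degree, degree_boxProd]

theorem K3deg_boxProd {α β : Type*} [Finite α] [Finite β] (G : SimpleGraph α)
    (H : SimpleGraph β) (x : α × β) : K3deg (G □ H) x = K3deg G x.1 + K3deg H x.2 :=
  ncard_cliquesThrough_boxProd (by norm_num) x.1 x.2

theorem stmt9 {V1 V2 : Type*} [Fintype V1] [Fintype V2] [Nonempty V1] [Nonempty V2]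
    (G1 : SimpleGraph V1) (G2 : SimpleGraph V2) :
    ((∃ r, ∀ v, deg (G1.boxProd G2) v = r) ∧ (∃ s, ∀ v, K3deg (G1.boxProd G2) v = s)) ↔
      (((∃ r, ∀ v, deg G1 v = r) ∧ (∃ s, ∀ v, K3deg G1 v = s)) ∧
        ((∃ r, ∀ v, deg G2 v = r) ∧ (∃ s, ∀ v, K3deg G2 v = s))) := by
  rw [exists_forall_eq_iff_of_eq_add (deg_boxProd G1 G2),
    exists_forall_eq_iff_of_eq_add (K3deg_boxProd G1 G2)]
  tauto
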